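/- arXiv:2205.10083 — 7 statements merged into one kernel-verified Lean document; each statement's English description precedes it below -/
import Mathlib

section
/- Let V be a finite set and let C : V → Fin χ be a coloring of V using χ ≥ 1 colors. Then there exists a colored separating system 𝓘 on (V, C) consisting of at most 2·⌈log₂ χ⌉ subsets of V. -/
/-- A colored separating system on `(V, C)`: for every ordered pair of distinct
elements `x, y` of `V` with different colors, some `I` in the system contains
`x` but not `y`. -/
def IsColoredSepSystem {V : Type*} {χ : ℕ} (C : V → Fin χ)
    (𝓘 : Finset (Finset V)) : Prop :=
  ∀ x y : V, x ≠ y → C x ≠ C y → ∃ I ∈ 𝓘, x ∈ I ∧ y ∉ I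

/-!
Label each colour by the binary expansion of its index, which has `⌈log₂ χ⌉` digits. Two
different colours differ in some digit `i`, so if `I_{i,b}` is the set of vertices whose colour
has `i`-th digit `b`, the `2 ⌈log₂ χ⌉` sets `I_{i,b}` form a colored separating system.
-/

theorem Nat.exists_testBit_ne_of_lt_two_pow {a b k : ℕ} (ha : a < 2 ^ k) (hb : b < 2 ^ k)
    (hab : a ≠ b) : ∃ i < k, a.testBit i ≠ b.testBit i := by
  obtain ⟨i, hi⟩ : ∃ i, a.testBit i ≠ b.testBit i := by
    by_contra! h
    exact hab (Nat.eq_of_testBit_eq h)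
  refine ⟨i, ?_, hi⟩
  by_contra! hki
  have hpow : 2 ^ k ≤ 2 ^ i := Nat.pow_le_pow_right two_pos hki
  exact hi <| (Nat.testBit_lt_two_pow (ha.trans_le hpow)).trans
    (Nat.testBit_lt_two_pow (hb.trans_le hpow)).symm

section BitSets

variable {V : Type*} [Fintype V] (f : V → ℕ)

def bitSet (i : ℕ) (b : Bool) : Finset V :=
  Finset.univ.filter fun v => (f v).testBit i = b

variable [DecidableEq V]

def bitSets (k : ℕ) : Finset (Finset V) :=
  (Finset.range k ×ˢ Finset.univ).image fun p : ℕ × Bool => bitSet f p.1 p.2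

theorem card_bitSets_le (k : ℕ) : (bitSets f k).card ≤ 2 * k := by
  calc (bitSets f k).card ≤ (Finset.range k ×ˢ (Finset.univ : Finset Bool)).card :=
        Finset.card_image_le
    _ = 2 * k := by simp [Finset.card_product, mul_comm]

theorem exists_mem_bitSets_separating {k : ℕ} (hf : ∀ v, f v < 2 ^ k) {x y : V}
    (hxy : f x ≠ f y) : ∃ I ∈ bitSets f k, x ∈ I ∧ y ∉ I := by
  obtain ⟨i, hik, hi⟩ := Nat.exists_testBit_ne_of_lt_two_pow (hf x) (hf y) hxy
  refine ⟨bitSet f i ((f x).testBit i), ?_, ?_, ?_⟩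
  · exact Finset.mem_image_of_mem _ (a := (i, _)) (by simpa using hik)
  · simp [bitSet]
  · simpa [bitSet] using hi.symm

end BitSets

theorem exists_colored_sep_system_general {V : Type*} [Fintype V] [DecidableEq V]
    {χ : ℕ} (C : V → Fin χ) :
    ∃ 𝓘 : Finset (Finset V),
      𝓘.card ≤ 2 * Nat.clog 2 χ ∧ IsColoredSepSystem C 𝓘 := by
  have hC : ∀ v, (C v : ℕ) < 2 ^ Nat.clog 2 χ :=
    fun v => (C v).isLt.trans_le (Nat.le_pow_clog one_lt_two χ)
  refine ⟨bitSets (fun v => (C v : ℕ)) (Nat.clog 2 χ), card_bitSets_le _ _, ?_⟩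
  intro x y _ hxy
  exact exists_mem_bitSets_separating _ hC (Fin.val_injective.ne hxy)

/-- Proposition 3: there is a colored separating system on `(V, C)` with at most
`2 ⌈log₂ χ⌉` elements. -/
theorem exists_colored_sep_system {V : Type*} [Fintype V] [DecidableEq V]
    {χ : ℕ} (hχ : 1 ≤ χ) (C : V → Fin χ) :
    ∃ 𝓘 : Finset (Finset V),
      𝓘.card ≤ 2 * Nat.clog 2 χ ∧ IsColoredSepSystem C 𝓘 :=
  exists_colored_sep_system_general C
end

section
/- Let V be a finite set and let 𝒮 = {S_1, …, S_k} be a partition of V into nonempty parts, with s = max_{1≤j≤k} |S_j|. Then there exists a lifted separating system 𝓘 on (V, 𝒮) consisting of at most s subsets of V. -/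
/-- A lifted separating system on `(V, 𝒮)`, where `𝒮` is a partition of `V`:
for every part `S` and every `x ∈ S`, some `I` in the system includes
`S \ {x}` and excludes `x`. -/
def IsLiftedSepSystem {V : Type*} [Fintype V] [DecidableEq V]
    (𝒮 : Finpartition (Finset.univ : Finset V)) (𝓘 : Finset (Finset V)) : Prop :=
  ∀ S ∈ 𝒮.parts, ∀ x ∈ S, ∃ I ∈ 𝓘, S \ {x} ⊆ I ∧ x ∉ I

/-!
Number the elements of each part `S` by `0, …, |S| - 1`, giving a labelling `f : V → ℕ`
that is injective on every part and takes values below `s`. The `s` sets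
`I_i = {v | f v ≠ i}` then separate: for `x ∈ S`, the set `I_{f x}` misses `x` and,
by injectivity of `f` on `S`, contains every other element of `S`.
-/

open Finset

namespace Finpartition

variable {α : Type*} [DecidableEq α] {u : Finset α}

theorem exists_injOn_parts_lt_card (P : Finpartition u) :
    ∃ f : α → ℕ, ∀ S ∈ P.parts, Set.InjOn f S ∧ ∀ v ∈ S, f v < S.card := by
  refine ⟨fun v => (P.part v).toList.idxOf v, fun S hS => ⟨?_, fun v hv => ?_⟩⟩
  · intro x hx y hy hxy
    simp only [P.part_eq_of_mem hS hx, P.part_eq_of_mem hS hy] at hxy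
    exact (List.idxOf_inj (mem_toList.2 hx)).1 hxy
  · simpa [P.part_eq_of_mem hS hv] using List.idxOf_lt_length_iff.2 (mem_toList.2 hv)

end Finpartition

section LabelComplements

variable {V : Type*} [Fintype V] [DecidableEq V]

def labelComplements (f : V → ℕ) (s : ℕ) : Finset (Finset V) :=
  (range s).image fun i => ({v | f v ≠ i} : Finset V)

theorem card_labelComplements_le (f : V → ℕ) (s : ℕ) : (labelComplements f s).card ≤ s :=
  card_image_le.trans (card_range s).le

theorem isLiftedSepSystem_labelComplements (𝒮 : Finpartition (univ : Finset V))
    {f : V → ℕ} {s : ℕ} (hinj : ∀ S ∈ 𝒮.parts, Set.InjOn f S)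
    (hlt : ∀ S ∈ 𝒮.parts, ∀ v ∈ S, f v < s) :
    IsLiftedSepSystem 𝒮 (labelComplements f s) := by
  intro S hS x hx
  refine ⟨({v | f v ≠ f x} : Finset V), mem_image.2 ⟨f x, mem_range.2 (hlt S hS x hx), rfl⟩,
    ?_, by simp⟩
  intro y hy
  obtain ⟨hyS, hyx⟩ := mem_sdiff.1 hy
  exact mem_filter.2 ⟨mem_univ y, fun hfy => hyx (mem_singleton.2 (hinj S hS hyS hx hfy))⟩

end LabelComplements

/-- Proposition 5: there is a lifted separating system on `(V, 𝒮)` with at most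
`s` elements, where `s` is the maximum part size of the partition `𝒮`. -/
theorem exists_lifted_sep_system {V : Type*} [Fintype V] [DecidableEq V]
    (𝒮 : Finpartition (Finset.univ : Finset V)) :
    ∃ 𝓘 : Finset (Finset V),
      𝓘.card ≤ 𝒮.parts.sup Finset.card ∧ IsLiftedSepSystem 𝒮 𝓘 := by
  obtain ⟨f, hf⟩ := 𝒮.exists_injOn_parts_lt_card
  refine ⟨labelComplements f (𝒮.parts.sup card), card_labelComplements_le _ _,
    isLiftedSepSystem_labelComplements 𝒮 (fun S hS => (hf S hS).1) fun S hS v hv => ?_⟩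
  exact ((hf S hS).2 v hv).trans_le (le_sup hS)
end

section
/- Let V be a finite set and let 𝒮 be a partition of V into nonempty parts with maximum part size s ≥ 2. Then there exists a lifted separating system 𝓘 on (V, 𝒮) in which every element I ∈ 𝓘 satisfies |I| ≤ s − 1. -/
namespace Finpartition

variable {α : Type*} [DecidableEq α] {s : Finset α} (P : Finpartition s)

def puncturedParts : Finset (Finset α) :=
  P.parts.biUnion fun S => S.image S.erase

variable {P}

theorem mem_puncturedParts {I : Finset α} :
    I ∈ P.puncturedParts ↔ ∃ S ∈ P.parts, ∃ x ∈ S, S.erase x = I := by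
  simp only [puncturedParts, Finset.mem_biUnion, Finset.mem_image]

theorem card_le_sup_card_sub_one_of_mem_puncturedParts {I : Finset α}
    (hI : I ∈ P.puncturedParts) : I.card ≤ P.parts.sup Finset.card - 1 := by
  obtain ⟨S, hS, x, hx, rfl⟩ := mem_puncturedParts.mp hI
  rw [Finset.card_erase_of_mem hx]
  exact Nat.sub_le_sub_right (Finset.le_sup hS) 1

end Finpartition

theorem isLiftedSepSystem_puncturedParts {V : Type*} [Fintype V] [DecidableEq V]
    (𝒮 : Finpartition (Finset.univ : Finset V)) :
    IsLiftedSepSystem 𝒮 𝒮.puncturedParts := fun S hS x hx =>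
  ⟨S.erase x, Finpartition.mem_puncturedParts.mpr ⟨S, hS, x, hx, rfl⟩,
    (Finset.sdiff_singleton_eq_erase x S).le, Finset.notMem_erase x S⟩

theorem exists_lifted_sep_system_size_le_general {V : Type*} [Fintype V] [DecidableEq V]
    (𝒮 : Finpartition (Finset.univ : Finset V)) :
    ∃ 𝓘 : Finset (Finset V),
      (∀ I ∈ 𝓘, I.card ≤ 𝒮.parts.sup Finset.card - 1) ∧
      IsLiftedSepSystem 𝒮 𝓘 :=
  ⟨𝒮.puncturedParts, fun _ => Finpartition.card_le_sup_card_sub_one_of_mem_puncturedParts,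
    isLiftedSepSystem_puncturedParts 𝒮⟩

/-- Corollary 7: if the maximum part size `s` of the partition `𝒮` satisfies
`s ≥ 2`, then there is a lifted separating system on `(V, 𝒮)` all of whose
elements have size at most `s - 1`. -/
theorem exists_lifted_sep_system_size_le {V : Type*} [Fintype V] [DecidableEq V]
    (𝒮 : Finpartition (Finset.univ : Finset V))
    (hs : 2 ≤ 𝒮.parts.sup Finset.card) :
    ∃ 𝓘 : Finset (Finset V),
      (∀ I ∈ 𝓘, I.card ≤ 𝒮.parts.sup Finset.card - 1) ∧
      IsLiftedSepSystem 𝒮 𝓘 :=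
  exists_lifted_sep_system_size_le_general 𝒮
end

section
/- Let V be a finite set with |V| = n and let M be an integer with 1 ≤ M < n. Then there exists a collection 𝓘 of subsets of V with |I| ≤ M for every I ∈ 𝓘 and |𝓘| ≤ ⌈n/M⌉·⌈log_{⌈n/M⌉} n⌉, such that for every ordered pair (x, y) of distinct elements of V there exists I ∈ 𝓘 with x ∈ I and y ∉ I. -/
/-! Number `V` by `0, …, n - 1` and set `k = ⌈n/M⌉`, `t = ⌈log_k n⌉`, so that `n ≤ k ^ t`.
For `j < t` colour `i` by its `j`-th base-`k` digit, shifted (for `j > 0`) by its lowest digit: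
`twistedDigit k j i`. The `t` colourings together determine `i`, so the `k t` colour classes
separate every ordered pair. The shift makes each colouring injective on every block
`{k q, …, k q + k - 1}`, and as `n ≤ k M` there are at most `M` blocks, so each colour class
has at most `M` elements. -/

open Finset

theorem exists_separating_of_colorings {V ι α : Type*} [Fintype V] [DecidableEq V] [Fintype ι]
    [Fintype α] [DecidableEq α] {M : ℕ} (c : ι → V → α)
    (hc : ∀ x y, (∀ j, c j x = c j y) → x = y) (hclass : ∀ j a, #{v | c j v = a} ≤ M) :
    ∃ 𝓘 : Finset (Finset V), (∀ I ∈ 𝓘, #I ≤ M) ∧ #𝓘 ≤ Fintype.card α * Fintype.card ι ∧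
      ∀ x y : V, x ≠ y → ∃ I ∈ 𝓘, x ∈ I ∧ y ∉ I := by
  refine ⟨univ.image fun p : α × ι => ({v | c p.2 v = p.1} : Finset V), ?_, ?_, ?_⟩
  · simp only [mem_image, mem_univ, true_and, forall_exists_index, Prod.forall]
    rintro _ a j rfl
    exact hclass j a
  · exact card_image_le.trans (by simp)
  · intro x y hxy
    obtain ⟨j, hj⟩ := not_forall.1 (mt (hc x y) hxy)
    exact ⟨({v | c j v = c j x} : Finset V), mem_image_of_mem _ (mem_univ (c j x, j)), by simp,
      by simpa [eq_comm] using hj⟩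

def twistedDigit (k j i : ℕ) : ℕ := if j = 0 then i % k else (i / k ^ j + i) % k

section TwistedDigit

variable {k i i' : ℕ}

lemma twistedDigit_lt (hk : 0 < k) (j i : ℕ) : twistedDigit k j i < k := by
  unfold twistedDigit; split <;> exact Nat.mod_lt _ hk

lemma eq_of_div_eq_of_twistedDigit_eq {j : ℕ} (hdiv : i / k = i' / k)
    (h : twistedDigit k j i = twistedDigit k j i') : i = i' := by
  refine Nat.ext_div_mod hdiv ?_
  rcases j with _ | j
  · simpa [twistedDigit] using h
  · have hhigh : i / k ^ (j + 1) = i' / k ^ (j + 1) := by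
      rw [pow_succ', ← Nat.div_div_eq_div_mul, ← Nat.div_div_eq_div_mul, hdiv]
    simp only [twistedDigit, Nat.add_one_ne_zero, if_false, hhigh] at h
    exact Nat.ModEq.add_left_cancel' _ h

lemma mod_pow_eq_of_forall_digit_eq {t : ℕ} (h : ∀ j < t, i / k ^ j % k = i' / k ^ j % k) :
    i % k ^ t = i' % k ^ t := by
  induction t with
  | zero => simp [Nat.mod_one]
  | succ t ih =>
    rw [Nat.mod_pow_succ, Nat.mod_pow_succ, ih fun j hj => h j (by omega), h t (by omega)]

lemma digit_eq_of_forall_twistedDigit_eq {t : ℕ}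
    (h : ∀ j < t, twistedDigit k j i = twistedDigit k j i') :
    ∀ j < t, i / k ^ j % k = i' / k ^ j % k := by
  intro j hj
  have hlow : i % k = i' % k := by simpa [twistedDigit] using h 0 (by omega)
  rcases j with _ | j
  · simpa using hlow
  · have hj := h (j + 1) hj
    simp only [twistedDigit, Nat.add_one_ne_zero, if_false] at hj
    exact Nat.ModEq.add_right_cancel hlow hj

lemma eq_of_forall_twistedDigit_eq {t : ℕ} (hi : i < k ^ t) (hi' : i' < k ^ t)
    (h : ∀ j < t, twistedDigit k j i = twistedDigit k j i') : i = i' := by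
  simpa [Nat.mod_eq_of_lt hi, Nat.mod_eq_of_lt hi'] using
    mod_pow_eq_of_forall_digit_eq (digit_eq_of_forall_twistedDigit_eq h)

lemma card_filter_twistedDigit_le {V : Type*} [Fintype V] {f : V → ℕ} (hf : f.Injective)
    {m : ℕ} (hfk : ∀ v, f v < k * m) (j a : ℕ) : #{v | twistedDigit k j (f v) = a} ≤ m := by
  calc #{v | twistedDigit k j (f v) = a}
      ≤ #(range m) := by
        refine card_le_card_of_injOn (fun v => f v / k)
          (fun v _ => mem_range.2 (Nat.div_lt_of_lt_mul (hfk v))) ?_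
        intro v hv w hw hvw
        simp only [coe_filter, mem_univ, true_and, Set.mem_ofPred_eq] at hv hw
        exact hf (eq_of_div_eq_of_twistedDigit_eq hvw (hv.trans hw.symm))
    _ = m := card_range m

end TwistedDigit

/-- Proposition 6 (Shanmugam et al.): for `1 ≤ M < n = |V|`, there is an
`(n, M)`-separating system on `V` with at most `⌈n/M⌉ ⌈log_{⌈n/M⌉} n⌉`
elements: a collection of subsets of `V`, each of size at most `M`, such that
for every ordered pair of distinct elements `(x, y)` some member contains `x`
but not `y`.  Here `⌈n/M⌉ = (n + M - 1) / M` and `⌈log_k n⌉ = Nat.clog k n`. -/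
theorem exists_nM_sep_system {V : Type*} [Fintype V] [DecidableEq V]
    (M : ℕ) (hM : 1 ≤ M) (hMn : M < Fintype.card V) :
    ∃ 𝓘 : Finset (Finset V),
      (∀ I ∈ 𝓘, I.card ≤ M) ∧
      𝓘.card ≤ ((Fintype.card V + M - 1) / M) *
        Nat.clog ((Fintype.card V + M - 1) / M) (Fintype.card V) ∧
      ∀ x y : V, x ≠ y → ∃ I ∈ 𝓘, x ∈ I ∧ y ∉ I := by
  set n := Fintype.card V
  set k := (n + M - 1) / M
  set t := Nat.clog k n
  have hk : 2 ≤ k := (Nat.le_div_iff_mul_le hM).2 (by omega)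
  have hnk : n ≤ k * M := by
    have := le_smul_ceilDiv (b := n) (a := M) hM
    rwa [Nat.ceilDiv_eq_add_pred_div, smul_eq_mul, mul_comm] at this
  have hnt : n ≤ k ^ t := Nat.le_pow_clog hk n
  let e := Fintype.equivFin V
  let c : Fin t → V → Fin k := fun j v =>
    ⟨twistedDigit k j (e v), twistedDigit_lt (by omega) _ _⟩
  obtain ⟨𝓘, h_card_le, h_num, hsep⟩ := exists_separating_of_colorings c
    (fun x y hxy => e.injective <| Fin.ext <| eq_of_forall_twistedDigit_eq
      ((e x).2.trans_le hnt) ((e y).2.trans_le hnt)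
      fun j hj => congrArg Fin.val (hxy ⟨j, hj⟩))
    (fun j a => by
      simpa [c, Fin.ext_iff] using card_filter_twistedDigit_le (f := fun v => e v)
        (Fin.val_injective.comp e.injective) (fun v => (e v).2.trans_le hnk) j a)
  exact ⟨𝓘, h_card_le, by simpa using h_num, hsep⟩
end

section
/- Let G be a directed graph on a finite vertex set V, let U be an undirected graph on V whose edge set contains the skeleton of G (i.e., any two vertices adjacent in G are adjacent in U), let C be a proper vertex coloring of U, and let 𝓘 be a colored separating system on (V, C). For each X ∈ V define D_X = (⋃_{I ∈ 𝓘 with X ∈ I} De(X, G_Ī)) ∩ Ne_U(X), where Ne_U(X) is the set of U-neighbors of X. Then Ch(X, G) ⊆ D_X ⊆ De(X, G) for every X ∈ V. -/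
/-! A child `y` of `X` is `U`-adjacent to `X`, hence coloured differently, so the separating
system contains some `I` with `X ∈ I` and `y ∉ I`; the edge `X → y` survives in `G_Ī`.
Conversely, intervening only deletes edges, so descendants in `G_Ī` are descendants in `G`. -/

def IsColoredSeparatingSystem {V ι : Type*} (C : V → ι) (𝓘 : Set (Set V)) : Prop :=
  ∀ x y : V, x ≠ y → C x ≠ C y → ∃ I ∈ 𝓘, x ∈ I ∧ y ∉ I

theorem IsColoredSeparatingSystem.exists_mem_notMem_of_adj {V ι : Type*}
    {U : V → V → Prop} {C : V → ι} (hC : ∀ x y, U x y → C x ≠ C y) {𝓘 : Set (Set V)}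
    (hsep : IsColoredSeparatingSystem C 𝓘) {x y : V} (hxy : U x y) :
    ∃ I ∈ 𝓘, x ∈ I ∧ y ∉ I :=
  hsep x y (fun h => hC x y hxy (congrArg C h)) (hC x y hxy)

theorem children_subset_D_subset_descendants_general
    {V : Type*} {χ : ℕ}
    (E : V → V → Prop)
    (U : V → V → Prop)
    (hskel : ∀ x y, E x y → U x y)
    (C : V → Fin χ) (hC : ∀ x y, U x y → C x ≠ C y)
    (𝓘 : Set (Set V))
    (hsep : ∀ x y : V, x ≠ y → C x ≠ C y → ∃ I ∈ 𝓘, x ∈ I ∧ y ∉ I)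
    (D : V → Set V)
    (hD : ∀ X, D X =
      {y | (∃ I ∈ 𝓘, X ∈ I ∧
        Relation.ReflTransGen (fun u v => E u v ∧ v ∉ I) X y) ∧ U X y}) :
    ∀ X : V, (∀ y, E X y → y ∈ D X) ∧ (D X ⊆ {y | Relation.ReflTransGen E X y}) := by
  intro X
  refine ⟨fun y hXy => ?_, fun y hy => ?_⟩
  · have hUXy := hskel X y hXy
    obtain ⟨I, hI, hXI, hyI⟩ :=
      IsColoredSeparatingSystem.exists_mem_notMem_of_adj hC hsep hUXy
    rw [hD]
    exact ⟨⟨I, hI, hXI, .single ⟨hXy, hyI⟩⟩, hUXy⟩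
  · rw [hD] at hy
    obtain ⟨⟨I, -, -, hXy⟩, -⟩ := hy
    exact Relation.ReflTransGen.mono (fun _ _ h => h.1) X y hXy

/-- Lemma 2 (correctness of the sets `D_X` in Algorithm 1).

A directed graph on a finite vertex set `V` is given by an irreflexive edge
relation `E`.  The intervened graph `G_Ī` has edge relation
`fun u v => E u v ∧ v ∉ I`.  Descendants are given by the reflexive-transitive
closure of the edge relation.  `U` is an undirected (symmetric) graph whose
edges contain the skeleton of `E`, `C` is a proper coloring of `U`, and `𝓘` is
a colored separating system on `(V, C)`.  For
`D_X = (⋃_{I ∈ 𝓘, X ∈ I} De(X, G_Ī)) ∩ Ne_U(X)` we have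
`Ch(X, G) ⊆ D_X ⊆ De(X, G)`. -/
theorem children_subset_D_subset_descendants
    {V : Type*} [Fintype V] {χ : ℕ}
    (E : V → V → Prop) (hE : ∀ x, ¬ E x x)
    (U : V → V → Prop) (hU : Symmetric U)
    (hskel : ∀ x y, E x y → U x y)
    (C : V → Fin χ) (hC : ∀ x y, U x y → C x ≠ C y)
    (𝓘 : Set (Set V))
    (hsep : ∀ x y : V, x ≠ y → C x ≠ C y → ∃ I ∈ 𝓘, x ∈ I ∧ y ∉ I)
    (D : V → Set V)
    (hD : ∀ X, D X =
      {y | (∃ I ∈ 𝓘, X ∈ I ∧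
        Relation.ReflTransGen (fun u v => E u v ∧ v ∉ I) X y) ∧ U X y}) :
    ∀ X : V, (∀ y, E X y → y ∈ D X) ∧ (D X ⊆ {y | Relation.ReflTransGen E X y}) :=
  children_subset_D_subset_descendants_general E U hskel C hC 𝓘 hsep D hD
end

section
/- Let G be a directed graph on a finite vertex set V, let X ∈ V, let S = SCC(X, G) be the strongly connected component of X, let Y ∈ S \ {X}, and let I ⊆ V \ {X} be a set with S \ {X} ⊆ I. Then X is a descendant of Y in the intervened graph G_Ī if and only if (Y, X) is an edge of G. -/
/-! A path from `Y` to `X` in `G_Ī` starts with an edge `Y → v` whose target `v` is not in `I`.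
Since `X` reaches `Y` and `v` reaches `X`, the vertex `v` lies in the strongly connected component
of `X`, and every such vertex other than `X` is in `I`; hence `v = X`. -/

namespace Relation

variable {V : Type*}

/-- The intervened graph `G_Ī`. -/
def intervene (E : V → V → Prop) (I : Set V) : V → V → Prop :=
  fun u v => E u v ∧ v ∉ I

def SameSCC (E : V → V → Prop) (x y : V) : Prop :=
  ReflTransGen E x y ∧ ReflTransGen E y x

variable {E : V → V → Prop} {I : Set V}

lemma reflTransGen_of_reflTransGen_intervene {a b : V}
    (h : ReflTransGen (intervene E I) a b) : ReflTransGen E a b :=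
  ReflTransGen.mono (fun _ _ huv => huv.1) _ _ h

lemma eq_of_intervene_of_reflTransGen {X u v : V}
    (hSI : ∀ z, z ≠ X → SameSCC E X z → z ∈ I)
    (hXu : ReflTransGen E X u) (huv : intervene E I u v)
    (hvX : ReflTransGen (intervene E I) v X) : v = X := by
  by_contra hne
  exact huv.2 <| hSI v hne ⟨hXu.tail huv.1, reflTransGen_of_reflTransGen_intervene hvX⟩

end Relation

open Relation in
theorem descendant_after_scc_intervention_iff_edge_general
    {V : Type*}
    (E : V → V → Prop)
    (X Y : V) (I : Set V)
    (hYX : Y ≠ X)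
    (hYscc : Relation.ReflTransGen E X Y ∧ Relation.ReflTransGen E Y X)
    (hXI : X ∉ I)
    (hSI : ∀ z, z ≠ X →
      (Relation.ReflTransGen E X z ∧ Relation.ReflTransGen E z X) → z ∈ I) :
    Relation.ReflTransGen (fun u v => E u v ∧ v ∉ I) Y X ↔ E Y X := by
  refine ⟨fun h => ?_, fun h => ReflTransGen.single ⟨h, hXI⟩⟩
  rcases h.cases_head with rfl | ⟨v, hYv, hvX⟩
  · exact absurd rfl hYX
  · obtain rfl := eq_of_intervene_of_reflTransGen hSI hYscc.1 hYv hvX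
    exact hYv.1

/-- The graph-theoretic core of Lemma 3: let `G` be a directed graph
(irreflexive edge relation `E`) on a finite vertex set `V`, let
`S = SCC(X, G)`, let `Y ∈ S \ {X}`, and let `I ⊆ V \ {X}` contain
`S \ {X}`.  Then `X` is a descendant of `Y` in the intervened graph `G_Ī`
(whose edge relation is `fun u v => E u v ∧ v ∉ I`) if and only if
`(Y, X)` is an edge of `G`. -/
theorem descendant_after_scc_intervention_iff_edge
    {V : Type*} [Fintype V]
    (E : V → V → Prop) (hE : ∀ x, ¬ E x x)
    (X Y : V) (I : Set V)
    (hYX : Y ≠ X)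
    (hYscc : Relation.ReflTransGen E X Y ∧ Relation.ReflTransGen E Y X)
    (hXI : X ∉ I)
    (hSI : ∀ z, z ≠ X →
      (Relation.ReflTransGen E X z ∧ Relation.ReflTransGen E z X) → z ∈ I) :
    Relation.ReflTransGen (fun u v => E u v ∧ v ∉ I) Y X ↔ E Y X :=
  descendant_after_scc_intervention_iff_edge_general E X Y I hYX hYscc hXI hSI
end

section
/- Let V be a finite set, let V_c ⊆ V with |V_c| = c, let X* and Y* be distinct elements of V_c, and let G' be the directed graph on V whose edge set is {(X, Y) : X, Y ∈ V_c, X ≠ Y} \ {(X*, Y*)}. Then for every I ⊆ V with |I| < c − 1, X* ∈ I, and Y* ∉ I, there exists Z ∈ V_c such that, in the intervened graph G'_Ī, Z is a child of both X* and Y* and a parent of Y* (hence Z is a common child of X* and Y* that is an ancestor of Y*, i.e., X* and Y* are joined by a virtual edge in G'_Ī). -/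
theorem Finset.exists_mem_ne_notMem_of_card_add_one_lt {α : Type*} {s t : Finset α}
    (h : t.card + 1 < s.card) (y : α) : ∃ z ∈ s, z ≠ y ∧ z ∉ t := by
  classical
  obtain ⟨z, hzs, hz⟩ := exists_mem_notMem_of_card_lt_card <|
    (card_insert_le y t).trans_lt h
  exact ⟨z, hzs, fun hzy => hz (hzy ▸ mem_insert_self z t), fun hzt => hz (mem_insert_of_mem hzt)⟩

theorem virtual_edge_remains_general {V : Type*}
    (Vc : Finset V) (c : ℕ) (hVc : Vc.card = c)
    (Xs Ys : V) (hXs : Xs ∈ Vc) (hYs : Ys ∈ Vc)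
    (E' : V → V → Prop)
    (hE' : ∀ x y, E' x y ↔
      (x ∈ Vc ∧ y ∈ Vc ∧ x ≠ y ∧ ¬(x = Xs ∧ y = Ys)))
    (I : Finset V) (hI : I.card < c - 1) (hXsI : Xs ∈ I) (hYsI : Ys ∉ I) :
    ∃ Z ∈ Vc,
      (E' Xs Z ∧ Z ∉ I) ∧ (E' Ys Z ∧ Z ∉ I) ∧ (E' Z Ys ∧ Ys ∉ I) := by
  obtain ⟨Z, hZVc, hZYs, hZI⟩ :=
    Finset.exists_mem_ne_notMem_of_card_add_one_lt (by omega : I.card + 1 < Vc.card) Ys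
  have hZXs : Z ≠ Xs := fun h => hZI (h ▸ hXsI)
  refine ⟨Z, hZVc, ⟨?_, hZI⟩, ⟨?_, hZI⟩, ⟨?_, hYsI⟩⟩
  · exact (hE' _ _).2 ⟨hXs, hZVc, hZXs.symm, fun h => hZYs h.2⟩
  · exact (hE' _ _).2 ⟨hYs, hZVc, hZYs.symm, fun h => hZYs h.2⟩
  · exact (hE' _ _).2 ⟨hZVc, hYs, hZYs, fun h => hZXs h.1⟩

/-- The key sub-claim in the proof of Theorem 1.  Let `Vc ⊆ V` with
`|Vc| = c`, let `X*` and `Y*` be distinct elements of `Vc`, and let `G'` be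
the directed graph on `V` whose edges are all ordered pairs of distinct
elements of `Vc` except `(X*, Y*)`.  Then for every `I ⊆ V` with
`|I| < c - 1`, `X* ∈ I` and `Y* ∉ I`, there exists `Z ∈ Vc` such that in the
intervened graph `G'_Ī` (edges of `G'` into `I` removed), `Z` is a child of
both `X*` and `Y*` and a parent of `Y*`; i.e. `X*` and `Y*` are joined by a
virtual edge in `G'_Ī`. -/
theorem virtual_edge_remains {V : Type*} [Fintype V] [DecidableEq V]
    (Vc : Finset V) (c : ℕ) (hVc : Vc.card = c)
    (Xs Ys : V) (hXs : Xs ∈ Vc) (hYs : Ys ∈ Vc) (hne : Xs ≠ Ys)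
    (E' : V → V → Prop)
    (hE' : ∀ x y, E' x y ↔
      (x ∈ Vc ∧ y ∈ Vc ∧ x ≠ y ∧ ¬(x = Xs ∧ y = Ys)))
    (I : Finset V) (hI : I.card < c - 1) (hXsI : Xs ∈ I) (hYsI : Ys ∉ I) :
    ∃ Z ∈ Vc,
      (E' Xs Z ∧ Z ∉ I) ∧ (E' Ys Z ∧ Z ∉ I) ∧ (E' Z Ys ∧ Ys ∉ I) :=
  virtual_edge_remains_general Vc c hVc Xs Ys hXs hYs E' hE' I hI hXsI hYsI
end
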